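/- arXiv:2402.08548 — 2 statements merged into one kernel-verified Lean document; each statement's English description precedes it below -/
import Mathlib

section
/- Let 0 < α⁻ ≤ α⁺ < 1 and ε₀ > 0, and let μ : (0, ε₀) → ℝ satisfy -2α⁺ ≤ μ(z) ≤ -2α⁻. Define s(x) = ∫_0^x exp(∫_y^{ε₀} μ(z)/(2z) dz) dy. Then for all x ∈ (0, ε₀): (ε₀^{-α⁺}/(1+α⁺)) x^{1+α⁺} ≤ s(x) ≤ (ε₀^{-α⁻}/(1+α⁻)) x^{1+α⁻}. -/
/-!
The drift bounds say `-α⁺ / z ≤ μ z / (2 z) ≤ -α⁻ / z`, and `exp (∫_y^ε₀ -α / z dz) = (y / ε₀) ^ α`,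
so the scale density `exp (∫_y^ε₀ μ z / (2 z) dz)` lies between `(y / ε₀) ^ α⁺` and `(y / ε₀) ^ α⁻`;
integrating these powers over `(0, x)` gives the bounds. Since `μ z / (2 z)` need not be integrable
at `0`, the inner integral is only ever taken over `[y, ε₀]` with `y > 0`.
-/

open MeasureTheory Set Real
open scoped Interval

theorem stronglyMeasurable_intervalIntegral_left {f : ℝ → ℝ} (hf : Measurable f) (b : ℝ) :
    StronglyMeasurable fun a => ∫ z in a..b, f z := by
  have hprod : ∀ s : Set (ℝ × ℝ), MeasurableSet s →
      StronglyMeasurable fun a => ∫ z, s.indicator (fun p => f p.2) (a, z) := fun s hs =>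
    ((hf.comp measurable_snd).indicator hs).stronglyMeasurable.integral_prod_right'
  have hleft := hprod {p | p.1 < p.2 ∧ p.2 ≤ b}
    ((measurableSet_lt measurable_fst measurable_snd).inter
      (measurableSet_le measurable_snd measurable_const))
  have hright := hprod {p | b < p.2 ∧ p.2 ≤ p.1}
    ((measurableSet_lt measurable_const measurable_snd).inter
      (measurableSet_le measurable_snd measurable_fst))
  convert hleft.sub hright using 1
  ext a
  simp only [intervalIntegral, ← integral_indicator measurableSet_Ioc, Pi.sub_apply]
  rfl

theorem intervalIntegrable_const_div_self (c : ℝ) {a b : ℝ} (h : (0 : ℝ) ∉ [[a, b]]) :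
    IntervalIntegrable (fun z => c / z) volume a b := by
  simp_rw [div_eq_mul_inv]
  exact (intervalIntegral.intervalIntegrable_inv (fun z hz hz0 => h (hz0 ▸ hz))
    continuousOn_id).const_mul c

theorem zero_notMem_uIcc_of_pos {a b : ℝ} (ha : 0 < a) (hb : 0 < b) : (0 : ℝ) ∉ [[a, b]] :=
  fun h => (lt_min ha hb).not_ge h.1

theorem exp_integral_neg_div_self (α : ℝ) {y ε : ℝ} (hy : 0 < y) (hε : 0 < ε) :
    exp (∫ z in y..ε, -α / z) = (y / ε) ^ α := by
  simp_rw [div_eq_mul_inv (-α), intervalIntegral.integral_const_mul,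
    integral_inv (zero_notMem_uIcc_of_pos hy hε), rpow_def_of_pos (div_pos hy hε),
    log_div hy.ne' hε.ne', log_div hε.ne' hy.ne']
  ring_nf

theorem rpow_le_exp_integral {f : ℝ → ℝ} {β y ε : ℝ} (hy : 0 < y) (hyε : y ≤ ε)
    (hf : IntervalIntegrable f volume y ε) (h : ∀ z ∈ Ioo y ε, -β / z ≤ f z) :
    (y / ε) ^ β ≤ exp (∫ z in y..ε, f z) := by
  rw [← exp_integral_neg_div_self β hy (hy.trans_le hyε)]
  exact exp_le_exp.2 <| intervalIntegral.integral_mono_on_of_le_Ioo hyε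
    (intervalIntegrable_const_div_self _ (zero_notMem_uIcc_of_pos hy (hy.trans_le hyε))) hf h

theorem exp_integral_le_rpow {f : ℝ → ℝ} {α y ε : ℝ} (hy : 0 < y) (hyε : y ≤ ε)
    (hf : IntervalIntegrable f volume y ε) (h : ∀ z ∈ Ioo y ε, f z ≤ -α / z) :
    exp (∫ z in y..ε, f z) ≤ (y / ε) ^ α := by
  rw [← exp_integral_neg_div_self α hy (hy.trans_le hyε)]
  exact exp_le_exp.2 <| intervalIntegral.integral_mono_on_of_le_Ioo hyε hf
    (intervalIntegrable_const_div_self _ (zero_notMem_uIcc_of_pos hy (hy.trans_le hyε))) h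

theorem integral_div_rpow {α ε x : ℝ} (hα : -1 < α) (hε : 0 < ε) (hx : 0 ≤ x) :
    ∫ y in 0..x, (y / ε) ^ α = ε ^ (-α) / (1 + α) * x ^ (1 + α) := by
  have hα1 : α + 1 ≠ 0 := by linarith
  rw [intervalIntegral.integral_congr (g := fun y => y ^ α / ε ^ α) fun y hy =>
      div_rpow (by rw [uIcc_of_le hx] at hy; exact hy.1) hε.le α,
    intervalIntegral.integral_div, integral_rpow (Or.inl hα), zero_rpow hα1, rpow_neg hε.le,
    add_comm 1 α]
  field_simp
  ring

theorem intervalIntegrable_div_rpow {α ε x : ℝ} (hα : -1 < α) (hε : 0 < ε) (hx : 0 ≤ x) :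
    IntervalIntegrable (fun y => (y / ε) ^ α) volume 0 x :=
  ((intervalIntegral.intervalIntegrable_rpow' hα).div_const (ε ^ α)).congr fun y hy =>
    (div_rpow (by rw [uIoc_of_le hx] at hy; exact hy.1.le) hε.le α).symm

section NegDivBounds

variable {f : ℝ → ℝ} {α β ε : ℝ} (hf : Measurable f)
  (hbound : ∀ z ∈ Ioo 0 ε, -β / z ≤ f z ∧ f z ≤ -α / z)
include hf hbound

theorem intervalIntegrable_of_neg_div_bounds {y : ℝ} (hy : 0 < y) (hyε : y ≤ ε) :
    IntervalIntegrable f volume y ε := by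
  have h0 := zero_notMem_uIcc_of_pos hy (hy.trans_le hyε)
  have hIoo : ∀ z ∈ Ioo y ε, -β / z ≤ f z ∧ f z ≤ -α / z := fun z hz =>
    hbound z ⟨hy.trans hz.1, hz.2⟩
  rw [intervalIntegrable_iff_integrableOn_Ioo_of_le hyε]
  refine integrable_of_le_of_le hf.aestronglyMeasurable ?_ ?_
    ((intervalIntegrable_const_div_self (-β) h0).1.mono_set Ioo_subset_Ioc_self)
    ((intervalIntegrable_const_div_self (-α) h0).1.mono_set Ioo_subset_Ioc_self)
  · exact (ae_restrict_iff' measurableSet_Ioo).2 (ae_of_all _ fun z hz => (hIoo z hz).1)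
  · exact (ae_restrict_iff' measurableSet_Ioo).2 (ae_of_all _ fun z hz => (hIoo z hz).2)

theorem div_rpow_le_exp_integral_le_div_rpow {y : ℝ} (hy : 0 < y) (hyε : y ≤ ε) :
    (y / ε) ^ β ≤ exp (∫ z in y..ε, f z) ∧ exp (∫ z in y..ε, f z) ≤ (y / ε) ^ α := by
  have hint := intervalIntegrable_of_neg_div_bounds hf hbound hy hyε
  exact ⟨rpow_le_exp_integral hy hyε hint fun z hz => (hbound z ⟨hy.trans hz.1, hz.2⟩).1,
    exp_integral_le_rpow hy hyε hint fun z hz => (hbound z ⟨hy.trans hz.1, hz.2⟩).2⟩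

theorem intervalIntegrable_exp_integral_of_neg_div_bounds (hα : -1 < α) {x : ℝ} (hx : 0 ≤ x)
    (hxε : x < ε) :
    IntervalIntegrable (fun y => exp (∫ z in y..ε, f z)) volume 0 x := by
  have hε : 0 < ε := hx.trans_lt hxε
  rw [intervalIntegrable_iff_integrableOn_Ioc_of_le hx]
  refine Integrable.mono' (intervalIntegrable_div_rpow hα hε hx).1
    (continuous_exp.comp_stronglyMeasurable
      (stronglyMeasurable_intervalIntegral_left hf ε)).aestronglyMeasurable
    ((ae_restrict_iff' measurableSet_Ioc).2 (ae_of_all _ fun y hy => ?_))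
  rw [norm_of_nonneg (exp_pos _).le]
  exact (div_rpow_le_exp_integral_le_div_rpow hf hbound hy.1 (hy.2.trans hxε.le)).2

end NegDivBounds

theorem stmt_1_general (αm αp ε₀ : ℝ) (hαm : 0 < αm) (hαle : αm ≤ αp)
    (μ : ℝ → ℝ) (hμmeas : Measurable μ)
    (hμ : ∀ z ∈ Set.Ioo (0:ℝ) ε₀, -2 * αp ≤ μ z ∧ μ z ≤ -2 * αm) :
    ∀ x ∈ Set.Ioo (0:ℝ) ε₀,
      (ε₀ ^ (-αp) / (1 + αp)) * x ^ (1 + αp)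
          ≤ (∫ y in (0:ℝ)..x, Real.exp (∫ z in y..ε₀, μ z / (2 * z))) ∧
      (∫ y in (0:ℝ)..x, Real.exp (∫ z in y..ε₀, μ z / (2 * z)))
          ≤ (ε₀ ^ (-αm) / (1 + αm)) * x ^ (1 + αm) := by
  rintro x ⟨hx0, hxε⟩
  have hε₀ : 0 < ε₀ := hx0.trans hxε
  have hαm' : -1 < αm := by linarith
  have hαp' : -1 < αp := by linarith
  have hmeas : Measurable fun z => μ z / (2 * z) := hμmeas.div (measurable_const.mul measurable_id)
  have hbound : ∀ z ∈ Ioo 0 ε₀, -αp / z ≤ μ z / (2 * z) ∧ μ z / (2 * z) ≤ -αm / z := by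
    intro z hz
    have h2z : 0 < 2 * z := by linarith [hz.1]
    rw [div_le_div_iff₀ hz.1 h2z, div_le_div_iff₀ h2z hz.1]
    constructor <;> nlinarith [hμ z hz, hz.1]
  have hint := intervalIntegrable_exp_integral_of_neg_div_bounds hmeas hbound hαm' hx0.le hxε
  have hpointwise y (hy : y ∈ Ioo 0 x) := div_rpow_le_exp_integral_le_div_rpow hmeas hbound hy.1
    (hy.2.trans hxε).le
  rw [← integral_div_rpow hαp' hε₀ hx0.le, ← integral_div_rpow hαm' hε₀ hx0.le]
  exact ⟨intervalIntegral.integral_mono_on_of_le_Ioo hx0.le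
      (intervalIntegrable_div_rpow hαp' hε₀ hx0.le) hint fun y hy => (hpointwise y hy).1,
    intervalIntegral.integral_mono_on_of_le_Ioo hx0.le hint
      (intervalIntegrable_div_rpow hαm' hε₀ hx0.le) fun y hy => (hpointwise y hy).2⟩

/-- Bounds on the scale function s(x) = ∫_0^x exp(∫_y^{ε₀} μ(z)/(2z) dz) dy
under the drift bounds -2α⁺ ≤ μ ≤ -2α⁻ on (0, ε₀), with 0 < α⁻ ≤ α⁺ < 1. -/
theorem stmt_1 (αm αp ε₀ : ℝ) (hαm : 0 < αm) (hαle : αm ≤ αp) (hαp1 : αp < 1)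
    (hε : 0 < ε₀) (μ : ℝ → ℝ) (hμmeas : Measurable μ)
    (hμ : ∀ z ∈ Set.Ioo (0:ℝ) ε₀, -2 * αp ≤ μ z ∧ μ z ≤ -2 * αm) :
    ∀ x ∈ Set.Ioo (0:ℝ) ε₀,
      (ε₀ ^ (-αp) / (1 + αp)) * x ^ (1 + αp)
          ≤ (∫ y in (0:ℝ)..x, Real.exp (∫ z in y..ε₀, μ z / (2 * z))) ∧
      (∫ y in (0:ℝ)..x, Real.exp (∫ z in y..ε₀, μ z / (2 * z)))
          ≤ (ε₀ ^ (-αm) / (1 + αm)) * x ^ (1 + αm) :=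
  stmt_1_general αm αp ε₀ hαm hαle μ hμmeas hμ
end

section
/- There exists a continuous, strictly increasing bijection g : [0, 1/32] → [0, 1/32] with g(0) = 0 such that liminf_{x→0⁺} g(x)/x = 0 and limsup_{x→0⁺} g(x)/x = ∞. Concretely, any continuous strictly increasing g with g(2^{-2^n}) = 2^{-2^n}, g(2^{-2^n - 1}) = 2^{-2^n - n}, and g(2^{-2^{n+1}+1}) = 2^{-2^{n+1}+n} for all n ≥ 3 satisfies g(2^{-2^n-1})/2^{-2^n-1} = 2^{-n+1} → 0 and g(2^{-2^{n+1}+1})/2^{-2^{n+1}+1} = 2^{n-1} → ∞. -/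
/-!
In the coordinate `t = -log x`, a homeomorphism `g` of `[0, e^{-a}]` fixing `0` becomes an
increasing map `φ` of `[a, ∞)` tending to `∞`, via `g x = exp (-φ (-log x))`, and then
`g x / x = exp (t - φ t)`. So it suffices to find such a `φ` for which `φ t - t` is unbounded
both above and below as `t → ∞`. The map `φ t = t + (t sin (log t) - K) / 2`, with `K` chosen
to make `log 32` a fixed point, does it: its derivative `1 + (sin + cos) (log t) / 2` is
positive, while `t sin (log t)` swings between `± t`.
-/

open Filter Topology Real Set

noncomputable section

lemma le_neg_log_of_le_exp_neg {a x : ℝ} (hx : 0 < x) (hxa : x ≤ exp (-a)) : a ≤ -log x := by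
  have := (log_le_iff_le_exp hx).2 hxa
  linarith

lemma tendsto_exp_neg_atTop_nhdsGT_zero : Tendsto (fun t => exp (-t)) atTop (𝓝[>] 0) :=
  tendsto_exp_atBot_nhdsGT.comp tendsto_neg_atTop_atBot

def negLogConj (φ : ℝ → ℝ) (x : ℝ) : ℝ := if x ≤ 0 then 0 else exp (-φ (-log x))

namespace negLogConj

variable {φ : ℝ → ℝ} {a : ℝ}

lemma of_pos {x : ℝ} (hx : 0 < x) : negLogConj φ x = exp (-φ (-log x)) := by
  simp [negLogConj, not_le.2 hx]

@[simp]
lemma zero : negLogConj φ 0 = 0 := by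
  simp [negLogConj]

lemma apply_exp_neg (t : ℝ) : negLogConj φ (exp (-t)) = exp (-φ t) := by
  rw [of_pos (exp_pos _), log_exp, neg_neg]

lemma apply_exp_neg_div (t : ℝ) : negLogConj φ (exp (-t)) / exp (-t) = exp (t - φ t) := by
  rw [apply_exp_neg, ← exp_sub]
  ring_nf

lemma strictMonoOn (hφ : StrictMonoOn φ (Ici a)) :
    StrictMonoOn (negLogConj φ) (Icc 0 (exp (-a))) := by
  intro x hx y hy hxy
  have hy0 : 0 < y := hx.1.trans_lt hxy
  rw [of_pos hy0]
  rcases hx.1.eq_or_lt with rfl | hx0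
  · simpa using exp_pos _
  rw [of_pos hx0, exp_lt_exp, neg_lt_neg_iff]
  exact hφ (le_neg_log_of_le_exp_neg hy0 hy.2) (le_neg_log_of_le_exp_neg hx0 hx.2)
    (neg_lt_neg (log_lt_log hx0 hxy))

lemma tendsto_nhdsGT_zero (hφ : Tendsto φ atTop atTop) :
    Tendsto (negLogConj φ) (𝓝[>] 0) (𝓝 0) := by
  have hlog : Tendsto (fun x => -log x) (𝓝[>] 0) atTop :=
    tendsto_neg_atBot_atTop.comp tendsto_log_nhdsGT_zero
  refine (tendsto_exp_atBot.comp (tendsto_neg_atTop_atBot.comp (hφ.comp hlog))).congr' ?_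
  filter_upwards [self_mem_nhdsWithin] with x hx
  exact (of_pos hx).symm

lemma continuousOn (hc : ContinuousOn φ (Ici a)) (hφ : Tendsto φ atTop atTop) :
    ContinuousOn (negLogConj φ) (Icc 0 (exp (-a))) := by
  have hpos : ContinuousOn (negLogConj φ) (Ioc 0 (exp (-a))) := by
    have hlog : ContinuousOn (fun x => -log x) (Ioc 0 (exp (-a))) :=
      (continuousOn_log.mono fun x hx => hx.1.ne').neg
    refine (continuous_exp.comp_continuousOn
      (hc.comp hlog fun x hx => le_neg_log_of_le_exp_neg hx.1 hx.2).neg).congr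
      fun x hx => of_pos hx.1
  intro x hx
  rcases hx.1.eq_or_lt with rfl | hx0
  · have h : ContinuousWithinAt (negLogConj φ) (Ioi 0) 0 := by
      simpa [ContinuousWithinAt] using tendsto_nhdsGT_zero hφ
    exact (continuousWithinAt_Ioi_iff_Ici.1 h).mono Icc_subset_Ici_self
  · refine (continuousWithinAt_inter (Ioi_mem_nhds hx0)).1 ?_
    exact (hpos x ⟨hx0, hx.2⟩).mono fun y hy => ⟨hy.2, hy.1.2⟩

lemma bijOn (hmono : StrictMonoOn φ (Ici a)) (hc : ContinuousOn φ (Ici a))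
    (hφ : Tendsto φ atTop atTop) (ha : φ a = a) :
    BijOn (negLogConj φ) (Icc 0 (exp (-a))) (Icc 0 (exp (-a))) := by
  have himage := (continuousOn hc hφ).image_Icc_of_monotoneOn (exp_pos _).le
    (strictMonoOn hmono).monotoneOn
  rw [zero, apply_exp_neg, ha] at himage
  have hbij := (strictMonoOn hmono).injOn.bijOn_image
  rwa [himage] at hbij

lemma frequently_div_lt (h : ∀ C, ∃ᶠ t in atTop, C < φ t - t) {ε : ℝ} (hε : 0 < ε) :
    ∃ᶠ x in 𝓝[>] 0, negLogConj φ x / x < ε := by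
  refine tendsto_exp_neg_atTop_nhdsGT_zero.frequently ((h (-log ε)).mono fun t ht => ?_)
  rw [apply_exp_neg_div, ← lt_log_iff_exp_lt hε]
  linarith

lemma frequently_lt_div (h : ∀ C, ∃ᶠ t in atTop, φ t - t < C) (M : ℝ) :
    ∃ᶠ x in 𝓝[>] 0, M < negLogConj φ x / x := by
  refine tendsto_exp_neg_atTop_nhdsGT_zero.frequently ((h (-M)).mono fun t ht => ?_)
  rw [apply_exp_neg_div]
  linarith [add_one_le_exp (t - φ t)]

end negLogConj

lemma frequently_sin_log_eq (c : ℝ) : ∃ᶠ t in atTop, sin (log t) = sin c := by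
  have hseq : Tendsto (fun n : ℕ => exp (c + n * (2 * π))) atTop atTop :=
    tendsto_exp_atTop.comp (tendsto_atTop_add_const_left _ c
      (tendsto_natCast_atTop_atTop.atTop_mul_const (by positivity)))
  refine hseq.frequently (Eventually.of_forall fun n => ?_).frequently
  rw [log_exp, sin_add_nat_mul_two_pi]

lemma frequently_lt_mul_sin_log (C : ℝ) : ∃ᶠ t in atTop, C < t * sin (log t) := by
  refine ((frequently_sin_log_eq (π / 2)).and_eventually (eventually_gt_atTop C)).mono ?_
  rintro t ⟨hsin, ht⟩
  rw [hsin, sin_pi_div_two, mul_one]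
  exact ht

lemma frequently_mul_sin_log_lt (C : ℝ) : ∃ᶠ t in atTop, t * sin (log t) < C := by
  refine ((frequently_sin_log_eq (-(π / 2))).and_eventually (eventually_gt_atTop (-C))).mono ?_
  rintro t ⟨hsin, ht⟩
  rw [hsin, sin_neg, sin_pi_div_two]
  linarith

def wobble (t : ℝ) : ℝ := t + (t * sin (log t) - log 32 * sin (log (log 32))) / 2

lemma wobble_log_32 : wobble (log 32) = log 32 := by
  unfold wobble
  ring

lemma hasDerivAt_wobble {t : ℝ} (ht : 0 < t) :
    HasDerivAt wobble (1 + (sin (log t) + cos (log t)) / 2) t := by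
  have h : HasDerivAt wobble (1 + (1 * sin (log t) + t * (cos (log t) * t⁻¹)) / 2) t :=
    (hasDerivAt_id' t).add ((((hasDerivAt_id' t).mul (hasDerivAt_log ht.ne').sin).sub_const
      (log 32 * sin (log (log 32)))).div_const 2)
  convert h using 3
  field_simp

lemma one_add_sin_add_cos_div_two_pos (u : ℝ) : 0 < 1 + (sin u + cos u) / 2 := by
  nlinarith [sin_sq_add_cos_sq u, sq_nonneg (sin u - cos u)]

lemma continuousOn_wobble : ContinuousOn wobble (Ioi 0) :=
  fun _ ht => (hasDerivAt_wobble ht).continuousAt.continuousWithinAt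

lemma strictMonoOn_wobble : StrictMonoOn wobble (Ioi 0) := by
  refine strictMonoOn_of_deriv_pos (convex_Ioi 0) continuousOn_wobble fun t ht => ?_
  rw [interior_Ioi] at ht
  rw [(hasDerivAt_wobble ht).deriv]
  exact one_add_sin_add_cos_div_two_pos _

lemma tendsto_wobble_atTop : Tendsto wobble atTop atTop := by
  refine tendsto_atTop_mono' _ ?_
    (tendsto_atTop_add_const_right _ (-(log 32 * sin (log (log 32))) / 2)
      (tendsto_id.atTop_div_const (by norm_num : (0 : ℝ) < 2)))
  filter_upwards [eventually_ge_atTop 0] with t ht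
  rw [id, wobble]
  nlinarith [neg_one_le_sin (log t)]

lemma frequently_lt_wobble_sub_self (C : ℝ) : ∃ᶠ t in atTop, C < wobble t - t :=
  (frequently_lt_mul_sin_log (2 * C + log 32 * sin (log (log 32)))).mono fun t ht => by
    unfold wobble
    linarith

lemma frequently_wobble_sub_self_lt (C : ℝ) : ∃ᶠ t in atTop, wobble t - t < C :=
  (frequently_mul_sin_log_lt (2 * C + log 32 * sin (log (log 32)))).mono fun t ht => by
    unfold wobble
    linarith

end

/-- There is a continuous strictly increasing bijection g of [0,1/32] fixing 0 with
liminf_{x→0⁺} g(x)/x = 0 (frequently g(x)/x < ε) and limsup_{x→0⁺} g(x)/x = ∞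
(frequently g(x)/x > M). -/
theorem stmt_18 :
    ∃ g : ℝ → ℝ,
      ContinuousOn g (Set.Icc 0 (1/32)) ∧
      StrictMonoOn g (Set.Icc 0 (1/32)) ∧
      Set.BijOn g (Set.Icc 0 (1/32)) (Set.Icc 0 (1/32)) ∧
      g 0 = 0 ∧
      (∀ ε > (0:ℝ), ∃ᶠ x in 𝓝[>] (0:ℝ), g x / x < ε) ∧
      (∀ M : ℝ, ∃ᶠ x in 𝓝[>] (0:ℝ), M < g x / x) := by
  have h32 : (1 / 32 : ℝ) = exp (-log 32) := by
    rw [exp_neg, exp_log (by norm_num)]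
    norm_num
  have hIci : Ici (log 32) ⊆ Ioi 0 := Ici_subset_Ioi.2 (log_pos (by norm_num))
  have hmono := strictMonoOn_wobble.mono hIci
  have hcont := continuousOn_wobble.mono hIci
  rw [h32]
  exact ⟨negLogConj wobble, negLogConj.continuousOn hcont tendsto_wobble_atTop,
    negLogConj.strictMonoOn hmono,
    negLogConj.bijOn hmono hcont tendsto_wobble_atTop wobble_log_32, negLogConj.zero,
    fun ε hε => negLogConj.frequently_div_lt frequently_lt_wobble_sub_self hε,
    negLogConj.frequently_lt_div frequently_wobble_sub_self_lt⟩
end
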